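/- arXiv:1907.06630 — 5 statements merged into one kernel-verified Lean document; each statement's English description precedes it below -/
import Mathlib

section
/- Let G be a connected finite simple graph and (H, f) a valued cover of G with f(v,1) + f(v,2) + ⋯ + f(v,κ) ≥ deg_G(v) for every vertex v ∈ V(G). If there exists a vertex w ∈ V(G) with f(w,1) + f(w,2) + ⋯ + f(w,κ) > deg_G(w), then H has a strictly f-degenerate transversal. -/
open SimpleGraph

universe u

/-- `H` is a cover of `G` with `κ` parts: every edge of `H` joins distinct fibres
`X_u`, `X_v` with `uv ∈ E(G)` (in particular each fibre is independent), and the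
edges between two fibres form a (possibly empty) matching. -/
def IsCover {V : Type u} (κ : ℕ) (G : SimpleGraph V) (H : SimpleGraph (V × Fin κ)) : Prop :=
  (∀ (u v : V) (p q : Fin κ), H.Adj (u, p) (v, q) → G.Adj u v) ∧
  (∀ (u v : V) (p q q' : Fin κ), H.Adj (u, p) (v, q) → H.Adj (u, p) (v, q') → q = q')

/-- The subgraph of `Γ` induced on `R` is strictly `f`-degenerate: every nonempty
subgraph with vertices inside `R` has a vertex whose degree there is `< f`. -/
def StrictlyFDegenerateOn {α : Type u} (Γ : SimpleGraph α) (f : α → ℕ) (R : Set α) : Prop :=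
  ∀ S : Set α, S ⊆ R → S.Nonempty → ∃ x ∈ S, (S ∩ {y | Γ.Adj x y}).ncard < f x

/-- `R` is a transversal of a cover with fibres `X_v = {v} × Fin κ`. -/
def IsTransversal {V : Type u} {κ : ℕ} (R : Set (V × Fin κ)) : Prop :=
  ∀ v : V, ∃! p : Fin κ, (v, p) ∈ R

/-- `H` has a strictly `f`-degenerate transversal. -/
def HasSFDTransversal {V : Type u} {κ : ℕ} (H : SimpleGraph (V × Fin κ))
    (f : V × Fin κ → ℕ) : Prop :=
  ∃ R : Set (V × Fin κ), IsTransversal R ∧ StrictlyFDegenerateOn H f R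

/-! Connectivity makes `G` strictly `g`-degenerate for `g v = ∑ q, f (v, q)`: a nonempty vertex
set `S` either contains `w`, whose degree is below `g w`, or misses some vertex, and then a vertex
of `S` with a neighbour outside `S` has fewer than `g` neighbours in `S`.

This degeneracy lifts to the cover. Peel off a vertex `v` with fewer than `g v` neighbours in the
remaining set `U` and choose the transversal on `U \ {v}` first. Each chosen vertex is adjacent in
`H` to at most one copy `(v, p)`, so the `κ` copies of `v` together have fewer than `g v` chosen
neighbours, and some copy `(v, p)` has fewer than `f (v, p)`; adding it keeps the transversal
strictly `f`-degenerate. -/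

open Finset

theorem Finset.ncard_coe_inter_setOf {α : Type*} (s : Finset α) (p : α → Prop)
    [DecidablePred p] : (↑s ∩ {x | p x}).ncard = #{x ∈ s | p x} := by
  rw [← Set.ncard_coe_finset, coe_filter]
  rfl

section Degenerate

variable {α : Type*} {Γ : SimpleGraph α} {f : α → ℕ} {R : Set α}

theorem StrictlyFDegenerateOn.mono {R' : Set α} (h : StrictlyFDegenerateOn Γ f R)
    (hR' : R' ⊆ R) : StrictlyFDegenerateOn Γ f R' :=
  fun S hS => h S (hS.trans hR')

theorem strictlyFDegenerateOn_empty : StrictlyFDegenerateOn Γ f ∅ :=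
  fun _ hS hne => absurd (Set.subset_empty_iff.1 hS) hne.ne_empty

theorem StrictlyFDegenerateOn.insert (h : StrictlyFDegenerateOn Γ f R) {x : α}
    (hfin : (R ∩ {y | Γ.Adj x y}).Finite) (hx : (R ∩ {y | Γ.Adj x y}).ncard < f x) :
    StrictlyFDegenerateOn Γ f (insert x R) := by
  intro S hS hne
  by_cases hxS : x ∈ S
  · refine ⟨x, hxS, lt_of_le_of_lt (Set.ncard_le_ncard ?_ hfin) hx⟩
    rintro y ⟨hyS, hxy⟩
    exact ⟨(hS hyS).resolve_left hxy.ne', hxy⟩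
  · exact h S (fun y hy => (hS hy).resolve_left (ne_of_mem_of_not_mem hy hxS)) hne

end Degenerate

theorem SimpleGraph.Connected.strictlyFDegenerateOn_univ {V : Type*} [Finite V]
    {G : SimpleGraph V} (hG : G.Connected) {g : V → ℕ}
    (hg : ∀ v, (G.neighborSet v).ncard ≤ g v) {w : V} (hw : (G.neighborSet w).ncard < g w) :
    StrictlyFDegenerateOn G g Set.univ := by
  intro S _ hne
  by_cases hwS : w ∈ S
  · exact ⟨w, hwS, lt_of_le_of_lt (Set.ncard_le_ncard Set.inter_subset_right) hw⟩
  · obtain ⟨s, hs⟩ := hne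
    obtain ⟨d, -, hdS, hdS'⟩ := (hG.preconnected s w).some.exists_boundary_dart S hs hwS
    refine ⟨d.fst, hdS, lt_of_lt_of_le (Set.ncard_lt_ncard ?_) (hg d.fst)⟩
    exact (Set.ssubset_iff_of_subset Set.inter_subset_right).2 ⟨d.snd, d.adj, fun h => hdS' h.1⟩

namespace IsCover

variable {V : Type*} {κ : ℕ} {G : SimpleGraph V} {H : SimpleGraph (V × Fin κ)}

theorem card_filter_adj_le [DecidableRel H.Adj] [DecidableRel G.Adj] (hH : IsCover κ G H)
    (v : V) (y : V × Fin κ) : #{p | H.Adj (v, p) y} ≤ if G.Adj v y.1 then 1 else 0 := by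
  split_ifs with hvy
  · refine card_le_one.2 fun a ha b hb => ?_
    simp only [mem_filter, mem_univ, true_and] at ha hb
    exact hH.2 y.1 v y.2 a b ha.symm hb.symm
  · refine (card_eq_zero.2 (filter_eq_empty_iff.2 fun p _ hp => hvy ?_)).le
    exact hH.1 v y.1 p y.2 hp

theorem sum_card_filter_adj_le [DecidableRel H.Adj] [DecidableRel G.Adj] (hH : IsCover κ G H)
    (v : V) (T : Finset (V × Fin κ)) :
    ∑ p, #{y ∈ T | H.Adj (v, p) y} ≤ #{y ∈ T | G.Adj v y.1} :=
  calc ∑ p, #{y ∈ T | H.Adj (v, p) y}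
      = ∑ y ∈ T, #{p | H.Adj (v, p) y} :=
        sum_card_bipartiteAbove_eq_sum_card_bipartiteBelow (fun p y => H.Adj (v, p) y)
    _ ≤ ∑ y ∈ T, if G.Adj v y.1 then 1 else 0 := sum_le_sum fun y _ => hH.card_filter_adj_le v y
    _ = #{y ∈ T | G.Adj v y.1} := (card_filter _ _).symm

theorem exists_strictlyFDegenerateOn_image [NeZero κ] (hH : IsCover κ G H)
    {f : V × Fin κ → ℕ} (U : Finset V)
    (hU : StrictlyFDegenerateOn G (fun v => ∑ q, f (v, q)) U) :
    ∃ c : V → Fin κ, StrictlyFDegenerateOn H f ((fun u => (u, c u)) '' U) := by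
  classical
  induction U using Finset.strongInduction with
  | H U ih =>
  rcases U.eq_empty_or_nonempty with rfl | hne
  · exact ⟨0, by simpa using strictlyFDegenerateOn_empty⟩
  obtain ⟨v, hvU, hv⟩ := hU U subset_rfl (coe_nonempty.2 hne)
  obtain ⟨c, hc⟩ := ih (U.erase v) (erase_ssubset hvU) (hU.mono (by simp))
  rw [← coe_image] at hc
  set T := (U.erase v).image fun u => (u, c u)
  have hT : #{y ∈ T | G.Adj v y.1} < ∑ q, f (v, q) :=
    calc #{y ∈ T | G.Adj v y.1}
        ≤ #{u ∈ U.erase v | G.Adj v u} := by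
          rw [filter_image]
          exact card_image_le
      _ ≤ #{u ∈ U | G.Adj v u} := card_le_card (filter_subset_filter _ (erase_subset v U))
      _ = (↑U ∩ {u | G.Adj v u}).ncard := (ncard_coe_inter_setOf _ _).symm
      _ < ∑ q, f (v, q) := hv
  obtain ⟨p, -, hp⟩ := exists_lt_of_sum_lt (lt_of_le_of_lt (hH.sum_card_filter_adj_le v T) hT)
  refine ⟨Function.update c v p, ?_⟩
  have hinsert : (U.image fun u => (u, Function.update c v p u)) = insert (v, p) T := by
    conv_lhs => rw [← insert_erase hvU]
    rw [image_insert, Function.update_self]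
    refine congrArg _ (image_congr fun u hu => ?_)
    simp [Function.update_of_ne (ne_of_mem_erase hu)]
  rw [← coe_image, hinsert, coe_insert]
  refine hc.insert (Set.toFinite _) ?_
  rwa [ncard_coe_inter_setOf]

end IsCover

/-- If `G` is connected, `(H, f)` is a valued cover with
`∑ q f(v,q) ≥ deg_G v` everywhere and strict inequality at some vertex `w`,
then `H` has a strictly `f`-degenerate transversal. -/
theorem hasSFDTransversal_of_exists_gt
    {V : Type} [Fintype V] (G : SimpleGraph V) (hG : G.Connected) (κ : ℕ)
    (H : SimpleGraph (V × Fin κ)) (hH : IsCover κ G H) (f : V × Fin κ → ℕ)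
    (hf : ∀ v : V, (G.neighborSet v).ncard ≤ ∑ q : Fin κ, f (v, q))
    (w : V) (hw : (G.neighborSet w).ncard < ∑ q : Fin κ, f (w, q)) :
    HasSFDTransversal H f := by
  have : NeZero κ := ⟨by rintro rfl; simp at hw⟩
  obtain ⟨c, hc⟩ := hH.exists_strictlyFDegenerateOn_image univ
    (by simpa using hG.strictlyFDegenerateOn_univ hf hw)
  exact ⟨_, fun v => by simp, hc⟩
end

section
/- Let G be a connected finite simple graph and (H, f) a valued cover of G with f(v,1) + f(v,2) + ⋯ + f(v,κ) ≥ deg_G(v) for every vertex v ∈ V(G). If H has a strictly f-degenerate transversal, then H has a strictly f-degenerate transversal R such that deg_{H[R]}(v,q) ≤ f(v,q) for every vertex (v,q) ∈ R. -/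
open SimpleGraph

universe u

section Aux

open Finset

variable {V : Type} [Fintype V] {κ : ℕ}

/-- Integer indicator of a proposition. -/
private noncomputable def ind (P : Prop) : ℤ := by classical exact if P then 1 else 0

private lemma ind_pos {P : Prop} (h : P) : ind P = 1 := by
  unfold ind; split <;> tauto

private lemma ind_neg {P : Prop} (h : ¬ P) : ind P = 0 := by
  unfold ind; split <;> tauto

private lemma ind_nonneg (P : Prop) : 0 ≤ ind P := by
  unfold ind; split <;> norm_num

private lemma ind_congr {P Q : Prop} (h : P ↔ Q) : ind P = ind Q := by
  by_cases hp : P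
  · rw [ind_pos hp, ind_pos (h.mp hp)]
  · rw [ind_neg hp, ind_neg (fun hq => hp (h.mpr hq))]

/-- Degree of `(v, r)` into the transversal determined by `σ`, as an integer. -/
private noncomputable def auxT (H : SimpleGraph (V × Fin κ)) (σ : V → Fin κ)
    (v : V) (r : Fin κ) : ℤ :=
  ∑ w : V, ind (H.Adj (v, r) (w, σ w))

/-- Vertex weight. -/
private noncomputable def auxG (R₀ : Set (V × Fin κ)) (f : V × Fin κ → ℕ)
    (x : V × Fin κ) : ℤ :=
  ind (x ∉ R₀) - (f x : ℤ)

/-- The potential function. -/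
private noncomputable def auxPot (H : SimpleGraph (V × Fin κ)) (R₀ : Set (V × Fin κ))
    (f : V × Fin κ → ℕ) (σ : V → Fin κ) : ℤ :=
  ∑ v : V, (auxT H σ v (σ v) + 2 * auxG R₀ f (v, σ v))

omit [Fintype V] in
private lemma no_self_adj {G : SimpleGraph V} {H : SimpleGraph (V × Fin κ)}
    (hH : IsCover κ G H) (v : V) (a b : Fin κ) : ¬ H.Adj (v, a) (v, b) :=
  fun h => G.irrefl (hH.1 v v a b h)

private lemma auxT_ncard (H : SimpleGraph (V × Fin κ)) (σ : V → Fin κ) (v : V) (r : Fin κ) :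
    (((Set.range fun u => (u, σ u)) ∩ {y | H.Adj (v, r) y}).ncard : ℤ) = auxT H σ v r := by
  classical
  have hinj : Function.Injective (fun u : V => (u, σ u)) := fun a b h => congrArg Prod.fst h
  have hset : (Set.range fun u => (u, σ u)) ∩ {y | H.Adj (v, r) y}
      = (fun u : V => (u, σ u)) '' {u : V | H.Adj (v, r) (u, σ u)} := by
    ext y
    constructor
    · rintro ⟨⟨u, rfl⟩, hadj⟩
      exact ⟨u, hadj, rfl⟩
    · rintro ⟨u, hu, rfl⟩
      exact ⟨⟨u, rfl⟩, hu⟩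
  rw [hset, Set.ncard_image_of_injective _ hinj]
  have h2 : {u : V | H.Adj (v, r) (u, σ u)}
      = ↑(Finset.univ.filter fun u => H.Adj (v, r) (u, σ u)) := by
    ext u; simp
  rw [h2, Set.ncard_coe_finset, Finset.card_filter]
  push_cast
  apply Finset.sum_congr rfl
  intro w _
  unfold ind
  split <;> rfl

private lemma auxT_update_same [DecidableEq V] {G : SimpleGraph V}
    {H : SimpleGraph (V × Fin κ)} (hH : IsCover κ G H) (σ : V → Fin κ)
    (v : V) (p r : Fin κ) :
    auxT H (Function.update σ v p) v r = auxT H σ v r := by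
  unfold auxT
  apply Finset.sum_congr rfl
  intro w _
  by_cases hw : w = v
  · subst hw
    rw [ind_neg (no_self_adj hH w r _), ind_neg (no_self_adj hH w r _)]
  · rw [Function.update_of_ne hw]

private lemma sum_erase_ind [DecidableEq V] {G : SimpleGraph V}
    {H : SimpleGraph (V × Fin κ)} (hH : IsCover κ G H) (σ : V → Fin κ)
    (v : V) (r : Fin κ) :
    ∑ u ∈ Finset.univ.erase v, ind (H.Adj (u, σ u) (v, r)) = auxT H σ v r := by
  unfold auxT
  rw [← Finset.sum_erase_add _ _ (Finset.mem_univ v),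
      ind_neg (no_self_adj hH v r (σ v)), add_zero]
  apply Finset.sum_congr rfl
  intro u _
  exact ind_congr (H.adj_comm _ _)

private lemma auxT_update_other [DecidableEq V] {H : SimpleGraph (V × Fin κ)}
    (σ : V → Fin κ) (v : V) (p : Fin κ) {u : V} (hu : u ≠ v) (r : Fin κ) :
    auxT H (Function.update σ v p) u r
      = auxT H σ u r - ind (H.Adj (u, r) (v, σ v)) + ind (H.Adj (u, r) (v, p)) := by
  unfold auxT
  rw [← Finset.sum_erase_add _ _ (Finset.mem_univ v),
      ← Finset.sum_erase_add _ (fun w => ind (H.Adj (u, r) (w, σ w))) (Finset.mem_univ v)]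
  rw [Function.update_self]
  have hc : ∀ w ∈ Finset.univ.erase v,
      ind (H.Adj (u, r) (w, Function.update σ v p w)) = ind (H.Adj (u, r) (w, σ w)) := by
    intro w hw
    rw [Function.update_of_ne (Finset.ne_of_mem_erase hw)]
  rw [Finset.sum_congr rfl hc]
  ring

private lemma auxPot_update [DecidableEq V] {G : SimpleGraph V}
    {H : SimpleGraph (V × Fin κ)} (hH : IsCover κ G H) (R₀ : Set (V × Fin κ))
    (f : V × Fin κ → ℕ) (σ : V → Fin κ) (v : V) (p : Fin κ) :
    auxPot H R₀ f (Function.update σ v p)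
      = auxPot H R₀ f σ
        + 2 * ((auxT H σ v p + auxG R₀ f (v, p))
            - (auxT H σ v (σ v) + auxG R₀ f (v, σ v))) := by
  unfold auxPot
  rw [← Finset.sum_erase_add _ _ (Finset.mem_univ v),
      ← Finset.sum_erase_add _ (fun u => auxT H σ u (σ u) + 2 * auxG R₀ f (u, σ u))
        (Finset.mem_univ v)]
  rw [Function.update_self, auxT_update_same hH]
  have hterm : ∀ u ∈ Finset.univ.erase v,
      auxT H (Function.update σ v p) u (Function.update σ v p u)
          + 2 * auxG R₀ f (u, Function.update σ v p u)
        = (auxT H σ u (σ u) + 2 * auxG R₀ f (u, σ u))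
            + (ind (H.Adj (u, σ u) (v, p)) - ind (H.Adj (u, σ u) (v, σ v))) := by
    intro u hu
    have hne := Finset.ne_of_mem_erase hu
    rw [Function.update_of_ne hne, auxT_update_other σ v p hne]
    ring
  rw [Finset.sum_congr rfl hterm, Finset.sum_add_distrib, Finset.sum_sub_distrib,
      sum_erase_ind hH σ v (σ v), sum_erase_ind hH σ v p]
  ring

private lemma auxT_fibre_sum {G : SimpleGraph V} {H : SimpleGraph (V × Fin κ)}
    (hH : IsCover κ G H) (σ : V → Fin κ) (v : V) :
    ∑ r : Fin κ, auxT H σ v r ≤ ((G.neighborSet v).ncard : ℤ) := by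
  classical
  unfold auxT
  rw [Finset.sum_comm]
  have hw : ∀ w : V, ∑ r : Fin κ, ind (H.Adj (v, r) (w, σ w)) ≤ ind (G.Adj v w) := by
    intro w
    by_cases hadj : ∃ r, H.Adj (v, r) (w, σ w)
    · obtain ⟨r₀, hr₀⟩ := hadj
      have huniq : ∀ r, H.Adj (v, r) (w, σ w) → r = r₀ := fun r hr =>
        hH.2 w v (σ w) r r₀ hr.symm hr₀.symm
      have hterm : ∀ r : Fin κ, ind (H.Adj (v, r) (w, σ w)) = if r = r₀ then (1 : ℤ) else 0 := by
        intro r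
        by_cases hr : r = r₀
        · subst hr
          rw [ind_pos hr₀, if_pos rfl]
        · rw [ind_neg (fun h => hr (huniq r h)), if_neg hr]
      rw [Finset.sum_congr rfl (fun r _ => hterm r), Finset.sum_ite_eq' Finset.univ r₀]
      rw [if_pos (Finset.mem_univ r₀), ind_pos (hH.1 v w r₀ (σ w) hr₀)]
    · push_neg at hadj
      have hterm : ∀ r : Fin κ, ind (H.Adj (v, r) (w, σ w)) = 0 := fun r => ind_neg (hadj r)
      rw [Finset.sum_congr rfl (fun r _ => hterm r), Finset.sum_const, smul_zero]
      exact ind_nonneg _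
  calc ∑ w : V, ∑ r : Fin κ, ind (H.Adj (v, r) (w, σ w))
      ≤ ∑ w : V, ind (G.Adj v w) := Finset.sum_le_sum fun w _ => hw w
    _ = ((G.neighborSet v).ncard : ℤ) := by
        have hns : G.neighborSet v = ↑(Finset.univ.filter fun w => G.Adj v w) := by
          ext w; simp [SimpleGraph.mem_neighborSet]
        rw [hns, Set.ncard_coe_finset, Finset.card_filter]
        push_cast
        apply Finset.sum_congr rfl
        intro w _
        unfold ind
        split <;> rfl

end Aux

/-- If `G` is connected, `(H, f)` is a valued cover with
`∑ q f(v,q) ≥ deg_G v` for every vertex, and `H` has a strictly `f`-degenerate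
transversal, then it has one, `R`, in which every vertex `(v,q) ∈ R` has at most
`f(v,q)` neighbours inside `R`. -/
theorem exists_SFDTransversal_degree_le
    {V : Type} [Fintype V] (G : SimpleGraph V) (hG : G.Connected) (κ : ℕ)
    (H : SimpleGraph (V × Fin κ)) (hH : IsCover κ G H) (f : V × Fin κ → ℕ)
    (hf : ∀ v : V, (G.neighborSet v).ncard ≤ ∑ q : Fin κ, f (v, q))
    (hex : HasSFDTransversal H f) :
    ∃ R : Set (V × Fin κ), IsTransversal R ∧ StrictlyFDegenerateOn H f R ∧
      ∀ x ∈ R, (R ∩ {y | H.Adj x y}).ncard ≤ f x := by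
  classical
  obtain ⟨R₀, hR₀t, hR₀s⟩ := hex
  choose σ₀ hσ₀ using fun v => (hR₀t v).exists
  -- sum of the vertex weights over a fibre
  have hGsum : ∀ v : V,
      ∑ r : Fin κ, auxG R₀ f (v, r) = (κ : ℤ) - 1 - ∑ r : Fin κ, (f (v, r) : ℤ) := by
    intro v
    unfold auxG
    rw [Finset.sum_sub_distrib]
    obtain ⟨p₀, hp₀, hu⟩ := hR₀t v
    have hterm : ∀ r : Fin κ, ind ((v, r) ∉ R₀) = 1 - (if r = p₀ then (1 : ℤ) else 0) := by
      intro r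
      by_cases hr : r = p₀
      · subst hr
        rw [ind_neg (not_not_intro hp₀), if_pos rfl]
        norm_num
      · rw [ind_pos (fun hmem => hr (hu r hmem)), if_neg hr]
        norm_num
    rw [Finset.sum_congr rfl (fun r _ => hterm r), Finset.sum_sub_distrib,
        Finset.sum_const, Finset.sum_ite_eq' Finset.univ p₀, if_pos (Finset.mem_univ p₀)]
    simp [Finset.card_univ]
  -- choose a potential-minimizing transversal
  obtain ⟨σ, -, hmin⟩ := Finset.exists_min_image (Finset.univ : Finset (V → Fin κ))
    (auxPot H R₀ f) ⟨σ₀, Finset.mem_univ _⟩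
  -- key property at the minimum
  have hkey : ∀ v : V, auxT H σ v (σ v) + auxG R₀ f (v, σ v) ≤ 0 := by
    intro v
    by_contra hpos
    push_neg at hpos
    have hq : 1 ≤ auxT H σ v (σ v) + auxG R₀ f (v, σ v) := hpos
    have hsum : ∑ r : Fin κ, (auxT H σ v r + auxG R₀ f (v, r)) ≤ (κ : ℤ) - 1 := by
      rw [Finset.sum_add_distrib]
      have h1 := auxT_fibre_sum hH σ v
      have h2 := hGsum v
      have h3 : ((G.neighborSet v).ncard : ℤ) ≤ ∑ r : Fin κ, (f (v, r) : ℤ) := by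
        exact_mod_cast hf v
      linarith
    have hsplit := Finset.sum_erase_add Finset.univ
      (fun r => auxT H σ v r + auxG R₀ f (v, r)) (Finset.mem_univ (σ v))
    have hsum' : ∑ r ∈ Finset.univ.erase (σ v), (auxT H σ v r + auxG R₀ f (v, r))
        ≤ (κ : ℤ) - 2 := by linarith
    obtain ⟨r, hrmem, hr0⟩ :
        ∃ r ∈ Finset.univ.erase (σ v), auxT H σ v r + auxG R₀ f (v, r) ≤ 0 := by
      by_contra hall
      push_neg at hall
      have hge : ∀ r ∈ Finset.univ.erase (σ v),
          (1 : ℤ) ≤ auxT H σ v r + auxG R₀ f (v, r) := fun r hr => hall r hr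
      have hcard : ((Finset.univ.erase (σ v)).card : ℤ) = (κ : ℤ) - 1 := by
        rw [Finset.card_erase_of_mem (Finset.mem_univ _), Finset.card_univ, Fintype.card_fin]
        have hκ : 1 ≤ κ := (σ v).pos
        push_cast [hκ]
        ring
      have hlb := Finset.card_nsmul_le_sum (Finset.univ.erase (σ v)) _ 1 hge
      rw [nsmul_eq_mul, mul_one] at hlb
      rw [hcard] at hlb
      linarith
    have hcontr := hmin (Function.update σ v r) (Finset.mem_univ _)
    rw [auxPot_update hH R₀ f σ v r] at hcontr
    linarith
  -- assemble the answer
  refine ⟨Set.range fun v => (v, σ v), ?_, ?_, ?_⟩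
  · -- transversal
    intro v
    refine ⟨σ v, ⟨v, rfl⟩, ?_⟩
    rintro p ⟨u, hu⟩
    rw [Prod.mk.injEq] at hu
    obtain ⟨rfl, h2⟩ := hu
    exact h2.symm
  · -- strictly f-degenerate
    intro S hS hne
    by_contra hcon
    push_neg at hcon
    have hSR₀ : S ⊆ R₀ := by
      intro x hxS
      obtain ⟨v, rfl⟩ := hS hxS
      by_contra hxR₀
      have h2 := hkey v
      unfold auxG at h2
      rw [ind_pos hxR₀] at h2
      have h1 := auxT_ncard H σ v (σ v)
      have hmono : (S ∩ {y | H.Adj (v, σ v) y}).ncard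
          ≤ ((Set.range fun u => (u, σ u)) ∩ {y | H.Adj (v, σ v) y}).ncard :=
        Set.ncard_le_ncard (Set.inter_subset_inter hS (le_refl _)) (Set.toFinite _)
      have hcx : (f (v, σ v) : ℤ) ≤ ((S ∩ {y | H.Adj (v, σ v) y}).ncard : ℤ) := by
        exact_mod_cast hcon _ hxS
      have hmono' : ((S ∩ {y | H.Adj (v, σ v) y}).ncard : ℤ)
          ≤ (((Set.range fun u => (u, σ u)) ∩ {y | H.Adj (v, σ v) y}).ncard : ℤ) := by
        exact_mod_cast hmono
      linarith
    obtain ⟨x, hxS, hlt⟩ := hR₀s S hSR₀ hne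
    have := hcon x hxS
    omega
  · -- degree bound
    intro x hx
    obtain ⟨v, rfl⟩ := hx
    have h1 := auxT_ncard H σ v (σ v)
    have h2 := hkey v
    unfold auxG at h2
    have h3 : (0 : ℤ) ≤ ind ((v, σ v) ∉ R₀) := ind_nonneg _
    have h4 : (((Set.range fun u => (u, σ u)) ∩ {y | H.Adj (v, σ v) y}).ncard : ℤ)
        ≤ (f (v, σ v) : ℤ) := by linarith
    exact_mod_cast h4
end

section
/- Let G be a connected finite simple graph and (H, f) a valued cover of G. If f(v,1) + f(v,2) + ⋯ + f(v,κ) > deg_G(v) for every vertex v ∈ V(G), then H has a strictly f-degenerate transversal R such that deg_{H[R]}(v,q) < f(v,q) for every vertex (v,q) ∈ R. -/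
open SimpleGraph

universe u

/-!
Pick one colour `p v` in every fibre and maximise `Φ p = ∑ v, f (v, p v) - e(H[R_p])` over all
choices, where `R_p = {(v, p v)}`. Because the edges between two fibres form a matching, the
numbers `d_q` of neighbours of `(v, q)` in `R_p` add up to at most `deg_G v < ∑ q, f (v, q)`,
so some colour `q` has `d_q < f (v, q)`. Recolouring `v` with `q` changes `Φ` by
`(f (v, q) - d_q) - (f (v, p v) - d_{p v})`, which is positive as soon as
`d_{p v} ≥ f (v, p v)`. Hence every vertex of `R_p` has degree below `f` at a maximiser, and
such an `R_p` is strictly `f`-degenerate.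
-/

open Finset

theorem SimpleGraph.ncard_neighborSet_eq_degree {W : Type*} (Γ : SimpleGraph W) (v : W)
    [Fintype (Γ.neighborSet v)] : (Γ.neighborSet v).ncard = Γ.degree v := by
  rw [← coe_neighborFinset, Set.ncard_coe_finset, card_neighborFinset_eq_degree]

theorem SimpleGraph.ncard_edgeSet_eq_add_degree {W : Type*} [Fintype W] [DecidableEq W]
    (Γ : SimpleGraph W) [DecidableRel Γ.Adj] (v : W) :
    Γ.edgeSet.ncard = (Γ.deleteIncidenceSet v).edgeSet.ncard + Γ.degree v := by
  rw [← coe_edgeFinset, ← coe_edgeFinset, Set.ncard_coe_finset, Set.ncard_coe_finset,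
    card_edgeFinset_deleteIncidenceSet]
  have := Γ.degree_le_card_edgeFinset v
  omega

theorem Finset.sum_apply_update {ι α M : Type*} [Fintype ι] [DecidableEq ι] [AddCommGroup M]
    (g : ι → α → M) (p : ι → α) (i : ι) (a : α) :
    ∑ j, g j (Function.update p i a j) = ∑ j, g j (p j) + g i a - g i (p i) := by
  simp_rw [Function.apply_update, sum_update_of_mem (mem_univ i), sdiff_singleton_eq_erase,
    ← add_sum_erase _ _ (mem_univ i)]
  abel

theorem StrictlyFDegenerateOn.of_forall_ncard_lt {α : Type*} [Finite α] {Γ : SimpleGraph α}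
    {f : α → ℕ} {R : Set α} (h : ∀ x ∈ R, (R ∩ {y | Γ.Adj x y}).ncard < f x) :
    StrictlyFDegenerateOn Γ f R := by
  rintro S hSR ⟨x, hx⟩
  exact ⟨x, hx,
    (Set.ncard_le_ncard (Set.inter_subset_inter_left _ hSR)).trans_lt (h x (hSR hx))⟩

section Transversal

variable {V : Type*} {κ : ℕ} {G : SimpleGraph V} {H : SimpleGraph (V × Fin κ)}

theorem isTransversal_range (p : V → Fin κ) : IsTransversal (Set.range fun v => (v, p v)) := by
  intro v
  refine ⟨p v, ⟨v, rfl⟩, ?_⟩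
  rintro q ⟨w, hw⟩
  cases hw
  rfl

theorem IsCover.not_adj_of_fst_eq (hH : IsCover κ G H) (v : V) (q q' : Fin κ) :
    ¬ H.Adj (v, q) (v, q') :=
  fun h => G.irrefl (hH.1 v v q q' h)

theorem deleteIncidenceSet_comap_update [DecidableEq V] (p : V → Fin κ) (v : V) (q : Fin κ) :
    (H.comap fun u => (u, Function.update p v q u)).deleteIncidenceSet v =
      (H.comap fun u => (u, p u)).deleteIncidenceSet v := by
  ext a b
  simp only [deleteIncidenceSet_adj, comap_adj]
  constructor <;> rintro ⟨h, ha, hb⟩ <;> simp_all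

variable [Fintype V]

theorem ncard_range_inter_adj [DecidableRel H.Adj] (p : V → Fin κ) (v : V) :
    (Set.range (fun u => (u, p u)) ∩ {y | H.Adj (v, p v) y}).ncard =
      (H.comap fun u => (u, p u)).degree v := by
  rw [← Set.image_preimage_eq_range_inter,
    Set.ncard_image_of_injective _ fun a b h => (Prod.ext_iff.mp h).1]
  exact (H.comap fun u => (u, p u)).ncard_neighborSet_eq_degree v

variable (H) in
def conflicts [DecidableRel H.Adj] (p : V → Fin κ) (v : V) (q : Fin κ) : ℕ :=
  #{u | H.Adj (v, q) (u, p u)}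

variable (H) in
noncomputable def potential (f : V × Fin κ → ℕ) (p : V → Fin κ) : ℤ :=
  ∑ v, (f (v, p v) : ℤ) - (H.comap fun u => (u, p u)).edgeSet.ncard

variable [DecidableRel H.Adj] {f : V × Fin κ → ℕ}

theorem IsCover.sum_conflicts_le_degree [DecidableRel G.Adj] (hH : IsCover κ G H)
    (p : V → Fin κ) (v : V) : ∑ q, conflicts H p v q ≤ G.degree v := by
  calc ∑ q, conflicts H p v q
      = ∑ u, #{q | H.Adj (v, q) (u, p u)} :=
        sum_card_bipartiteAbove_eq_sum_card_bipartiteBelow _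
    _ ≤ ∑ u, if G.Adj v u then 1 else 0 := by
        refine sum_le_sum fun u _ => ?_
        split_ifs with hvu
        · exact card_le_one.mpr fun q hq q' hq' => hH.2 u v (p u) q q'
            (H.adj_symm (mem_filter.mp hq).2) (H.adj_symm (mem_filter.mp hq').2)
        · exact (card_eq_zero.mpr <| filter_eq_empty_iff.mpr
            fun q _ h => hvu (hH.1 _ _ _ _ h)).le
    _ = G.degree v := by
        rw [← card_filter, ← neighborFinset_eq_filter, card_neighborFinset_eq_degree]

theorem IsCover.exists_conflicts_lt [DecidableRel G.Adj] (hH : IsCover κ G H) (p : V → Fin κ)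
    {v : V} (hv : G.degree v < ∑ q, f (v, q)) : ∃ q, conflicts H p v q < f (v, q) := by
  obtain ⟨q, -, hq⟩ := exists_lt_of_sum_lt ((hH.sum_conflicts_le_degree p v).trans_lt hv)
  exact ⟨q, hq⟩

variable [DecidableEq V]

theorem IsCover.degree_comap_update (hH : IsCover κ G H) (p : V → Fin κ) (v : V) (q : Fin κ) :
    (H.comap fun u => (u, Function.update p v q u)).degree v = conflicts H p v q := by
  rw [← card_neighborFinset_eq_degree, neighborFinset_eq_filter, conflicts]
  congr 1
  ext u
  rcases eq_or_ne u v with rfl | hu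
  · simp [hH.not_adj_of_fst_eq]
  · simp [hu]

theorem IsCover.degree_comap (hH : IsCover κ G H) (p : V → Fin κ) (v : V) :
    (H.comap fun u => (u, p u)).degree v = conflicts H p v (p v) := by
  rw [← hH.degree_comap_update p v (p v), Function.update_eq_self]

theorem IsCover.potential_update (hH : IsCover κ G H) (p : V → Fin κ) (v : V) (q : Fin κ) :
    potential H f (Function.update p v q) = potential H f p +
      ((f (v, q) : ℤ) - conflicts H p v q) - ((f (v, p v) : ℤ) - conflicts H p v (p v)) := by
  unfold potential
  rw [ncard_edgeSet_eq_add_degree _ v, ncard_edgeSet_eq_add_degree (H.comap _) v,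
    hH.degree_comap_update, hH.degree_comap, sum_apply_update fun u r => (f (u, r) : ℤ),
    deleteIncidenceSet_comap_update]
  push_cast
  ring

theorem IsCover.potential_lt_potential_update (hH : IsCover κ G H) {p : V → Fin κ} {v : V}
    {q : Fin κ} (hbad : f (v, p v) ≤ conflicts H p v (p v)) (hq : conflicts H p v q < f (v, q)) :
    potential H f p < potential H f (Function.update p v q) := by
  rw [hH.potential_update]
  omega

theorem IsCover.exists_forall_degree_comap_lt [DecidableRel G.Adj] (hH : IsCover κ G H)
    (hf : ∀ v, G.degree v < ∑ q, f (v, q)) :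
    ∃ p : V → Fin κ, ∀ v, (H.comap fun u => (u, p u)).degree v < f (v, p v) := by
  have : Nonempty (V → Fin κ) :=
    ⟨fun v => (nonempty_of_sum_ne_zero (Nat.zero_lt_of_lt (hf v)).ne').choose⟩
  obtain ⟨p, hp⟩ := Finite.exists_max (potential H f)
  refine ⟨p, fun v => ?_⟩
  obtain ⟨q, hq⟩ := hH.exists_conflicts_lt p (hf v)
  rw [hH.degree_comap]
  by_contra! hbad
  exact (hp _).not_gt (hH.potential_lt_potential_update hbad hq)

end Transversal

theorem exists_SFDTransversal_degree_lt_general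
    {V : Type} [Fintype V] (G : SimpleGraph V) (κ : ℕ)
    (H : SimpleGraph (V × Fin κ)) (hH : IsCover κ G H) (f : V × Fin κ → ℕ)
    (hf : ∀ v : V, (G.neighborSet v).ncard < ∑ q : Fin κ, f (v, q)) :
    ∃ R : Set (V × Fin κ), IsTransversal R ∧ StrictlyFDegenerateOn H f R ∧
      ∀ x ∈ R, (R ∩ {y | H.Adj x y}).ncard < f x := by
  classical
  obtain ⟨p, hp⟩ :=
    hH.exists_forall_degree_comap_lt fun v => G.ncard_neighborSet_eq_degree v ▸ hf v
  have hdeg : ∀ x ∈ Set.range fun v => (v, p v),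
      (Set.range (fun v => (v, p v)) ∩ {y | H.Adj x y}).ncard < f x := by
    rintro _ ⟨v, rfl⟩
    rw [ncard_range_inter_adj]
    exact hp v
  exact ⟨_, isTransversal_range p, .of_forall_ncard_lt hdeg, hdeg⟩

/-- If `G` is connected and `(H, f)` is a valued cover with
`∑ q f(v,q) > deg_G v` for every vertex, then `H` has a strictly `f`-degenerate
transversal `R` in which every vertex `(v,q) ∈ R` has fewer than `f(v,q)`
neighbours inside `R`. -/
theorem exists_SFDTransversal_degree_lt
    {V : Type} [Fintype V] (G : SimpleGraph V) (hG : G.Connected) (κ : ℕ)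
    (H : SimpleGraph (V × Fin κ)) (hH : IsCover κ G H) (f : V × Fin κ → ℕ)
    (hf : ∀ v : V, (G.neighborSet v).ncard < ∑ q : Fin κ, f (v, q)) :
    ∃ R : Set (V × Fin κ), IsTransversal R ∧ StrictlyFDegenerateOn H f R ∧
      ∀ x ∈ R, (R ∩ {y | H.Adj x y}).ncard < f x :=
  exists_SFDTransversal_degree_lt_general G κ H hH f hf
end

section
/- Every finite simple graph with maximum degree Δ has linear list vertex arboricity at most ⌈(Δ+1)/2⌉; that is, if L is a list assignment with |L(v)| ≥ ⌈(Δ+1)/2⌉ for every v ∈ V(G), then there is a coloring φ with φ(v) ∈ L(v) for every v such that every color class induces a forest with maximum degree at most two. -/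
open SimpleGraph

universe u

/-!
Among all list colourings choose one minimising the number of monochromatic edges. If a vertex
`v` had two neighbours of its own colour, then, since `deg v ≤ Δ < 2 |L v|`, pigeonhole gives a
colour `c ∈ L v` used on at most one neighbour of `v`; recolouring `v` with `c` changes only the
edges at `v` and strictly decreases the count. So every colour class induces a graph of maximum
degree at most one, which is a linear forest.
-/

open Finset

namespace SimpleGraph

variable {V α : Type*}

theorem isAcyclic_of_subsingleton_neighborSet {G : SimpleGraph V}
    (h : ∀ v, (G.neighborSet v).Subsingleton) : G.IsAcyclic := fun u _ hp =>
  hp.snd_ne_penultimate <| h u (Walk.adj_snd hp.not_nil) (Walk.adj_penultimate hp.not_nil).symm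

theorem card_edgeFinset_deleteIncidenceSet_add_degree [Fintype V] [DecidableEq V]
    (G : SimpleGraph V) [DecidableRel G.Adj] (v : V) :
    #(G.deleteIncidenceSet v).edgeFinset + G.degree v = #G.edgeFinset := by
  rw [card_edgeFinset_deleteIncidenceSet]
  have := G.degree_le_card_edgeFinset v
  omega

def monochromatic (G : SimpleGraph V) (θ : V → α) : SimpleGraph V where
  Adj x y := G.Adj x y ∧ θ x = θ y
  symm := ⟨fun _ _ h => ⟨h.1.symm, h.2.symm⟩⟩
  loopless := ⟨fun _ h => G.irrefl h.1⟩

@[simp]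
theorem monochromatic_adj {G : SimpleGraph V} {θ : V → α} {x y : V} :
    (G.monochromatic θ).Adj x y ↔ G.Adj x y ∧ θ x = θ y :=
  Iff.rfl

instance (G : SimpleGraph V) [DecidableRel G.Adj] [DecidableEq α] (θ : V → α) :
    DecidableRel (G.monochromatic θ).Adj :=
  fun x y => inferInstanceAs (Decidable (G.Adj x y ∧ θ x = θ y))

variable (G : SimpleGraph V)

theorem induce_monochromatic_setOf_eq (θ : V → α) (c : α) :
    (G.monochromatic θ).induce {v | θ v = c} = G.induce {v | θ v = c} := by
  ext x y
  simp only [comap_adj, Function.Embedding.subtype_apply, monochromatic_adj, and_iff_left_iff_imp]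
  exact fun _ => x.2.trans y.2.symm

theorem deleteIncidenceSet_monochromatic_congr {θ θ' : V → α} {v : V}
    (h : ∀ x ≠ v, θ x = θ' x) :
    (G.monochromatic θ).deleteIncidenceSet v = (G.monochromatic θ').deleteIncidenceSet v := by
  ext x y
  simp only [deleteIncidenceSet_adj, monochromatic_adj]
  exact and_congr_left fun ⟨hx, hy⟩ => by rw [h x hx, h y hy]

variable [Fintype V] [DecidableRel G.Adj] [DecidableEq α]

theorem degree_monochromatic (θ : V → α) (v : V) :
    (G.monochromatic θ).degree v = #{y ∈ G.neighborFinset v | θ y = θ v} := by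
  rw [← card_neighborFinset_eq_degree]
  congr 1
  ext y
  simp [eq_comm]

theorem card_edgeFinset_monochromatic_lt [DecidableEq V] {θ θ' : V → α} {v : V}
    (h : ∀ x ≠ v, θ x = θ' x)
    (hdeg : (G.monochromatic θ').degree v < (G.monochromatic θ).degree v) :
    #(G.monochromatic θ').edgeFinset < #(G.monochromatic θ).edgeFinset := by
  rw [← card_edgeFinset_deleteIncidenceSet_add_degree _ v,
    ← card_edgeFinset_deleteIncidenceSet_add_degree (G.monochromatic θ) v,
    edgeFinset_inj.mpr (G.deleteIncidenceSet_monochromatic_congr h)]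
  omega

theorem exists_listColoring_subsingleton_neighborSet_monochromatic (L : V → Finset α)
    (hL : ∀ v, G.degree v < 2 * #(L v)) :
    ∃ φ : V → α, (∀ v, φ v ∈ L v) ∧ ∀ v, ((G.monochromatic φ).neighborSet v).Subsingleton := by
  classical
  have hne : (Fintype.piFinset L).Nonempty :=
    Fintype.piFinset_nonempty.mpr fun v => card_pos.mp (by have := hL v; omega)
  obtain ⟨φ, hφL, hφmin⟩ :=
    (Fintype.piFinset L).exists_min_image (fun θ => #(G.monochromatic θ).edgeFinset) hne
  rw [Fintype.mem_piFinset] at hφL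
  refine ⟨φ, hφL, fun v => ?_⟩
  suffices hdeg : (G.monochromatic φ).degree v ≤ 1 from fun a ha b hb =>
    card_le_one.mp hdeg a (by simpa using ha) b (by simpa using hb)
  by_contra! hdeg
  obtain ⟨c, hc, hcard⟩ := exists_card_fiber_lt_of_card_lt_mul (s := G.neighborFinset v)
    (t := L v) (f := φ) (n := 2) (by rw [card_neighborFinset_eq_degree, mul_comm]; exact hL v)
  set ψ := Function.update φ v c
  have hψ : ∀ x ≠ v, φ x = ψ x := fun x hx => (Function.update_of_ne hx c φ).symm
  have hψL : ψ ∈ Fintype.piFinset L := by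
    refine Fintype.mem_piFinset.mpr fun x => ?_
    rcases eq_or_ne x v with rfl | hx
    · simpa [ψ] using hc
    · exact hψ x hx ▸ hφL x
  have hψdeg : (G.monochromatic ψ).degree v = #{y ∈ G.neighborFinset v | φ y = c} := by
    rw [degree_monochromatic, show ψ v = c from Function.update_self v c φ]
    refine congrArg card (filter_congr fun y hy => ?_)
    rw [← hψ y (G.ne_of_adj ((mem_neighborFinset _ _ _).mp hy)).symm]
  exact (hφmin ψ hψL).not_gt (G.card_edgeFinset_monochromatic_lt hψ (by omega))

end SimpleGraph

theorem linearListVertexArboricity_le_general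
    {V : Type} [Fintype V] (G : SimpleGraph V) [DecidableRel G.Adj]
    (Δ : ℕ) (hΔ : G.maxDegree = Δ)
    (L : V → Finset ℕ) (hL : ∀ v : V, (Δ + 2) / 2 ≤ (L v).card) :
    ∃ φ : V → ℕ, (∀ v : V, φ v ∈ L v) ∧
      ∀ c : ℕ, (G.induce {v : V | φ v = c}).IsAcyclic ∧
        ∀ v : {v : V | φ v = c},
          ((G.induce {v : V | φ v = c}).neighborSet v).ncard ≤ 2 := by
  obtain ⟨φ, hφL, hφ⟩ := G.exists_listColoring_subsingleton_neighborSet_monochromatic L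
    fun v => by have := hL v; have := G.degree_le_maxDegree v; omega
  refine ⟨φ, hφL, fun c => ?_⟩
  have hsub (x : {v : V | φ v = c}) :
      ((G.induce {v : V | φ v = c}).neighborSet x).Subsingleton := by
    rw [← G.induce_monochromatic_setOf_eq]
    exact (hφ x).preimage Subtype.val_injective
  exact ⟨isAcyclic_of_subsingleton_neighborSet hsub, fun x =>
    (Set.ncard_le_one_iff_subsingleton.mpr (hsub x)).trans one_le_two⟩

/-- Every graph with maximum degree `Δ` has linear list vertex
arboricity at most `⌈(Δ+1)/2⌉`: for every list assignment `L` with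
`|L v| ≥ ⌈(Δ+1)/2⌉`, there is a coloring `φ` with `φ v ∈ L v` whose every color
class induces a forest of maximum degree at most two. -/
theorem linearListVertexArboricity_le
    {V : Type} [Fintype V] [DecidableEq V] (G : SimpleGraph V) [DecidableRel G.Adj]
    (Δ : ℕ) (hΔ : G.maxDegree = Δ)
    (L : V → Finset ℕ) (hL : ∀ v : V, (Δ + 2) / 2 ≤ (L v).card) :
    ∃ φ : V → ℕ, (∀ v : V, φ v ∈ L v) ∧
      ∀ c : ℕ, (G.induce {v : V | φ v = c}).IsAcyclic ∧
        ∀ v : {v : V | φ v = c},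
          ((G.induce {v : V | φ v = c}).neighborSet v).ncard ≤ 2 :=
  linearListVertexArboricity_le_general G Δ hΔ L hL
end

section
/- Let G be a connected finite simple graph and (H, f) a valued cover of G with f a function from V(H) to {0, 1, 2}. If f(v,1) + f(v,2) + ⋯ + f(v,κ) > deg_G(v) for every vertex v ∈ V(G), then H has a strictly f-degenerate transversal R such that the maximum degree of H[R] is at most one. -/
open SimpleGraph

universe u

section SFDAux

open Finset
open scoped Classical

set_option linter.unusedSectionVars false

variable {V : Type} [Fintype V] {κ : ℕ}

/-- Auxiliary: a generic double sum of a symmetric weight over chosen vertices. -/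
noncomputable def SFDephi (F : (V × Fin κ) → (V × Fin κ) → ℕ) (g : V → Fin κ) : ℕ :=
  ∑ u : V, ∑ w : V, F (u, g u) (w, g w)

/-- Auxiliary: weight seen from vertex `v` if it chooses colour `p`. -/
noncomputable def SFDlcnt (F : (V × Fin κ) → (V × Fin κ) → ℕ) (g : V → Fin κ)
    (v : V) (p : Fin κ) : ℕ :=
  ∑ u ∈ Finset.univ.erase v, F (u, g u) (v, p)

lemma SFDsum_split (F : V → V → ℕ) (v : V) :
    ∑ u : V, ∑ w : V, F u w
      = (∑ u ∈ univ.erase v, ∑ w ∈ univ.erase v, F u w)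
        + (∑ u ∈ univ.erase v, F u v) + (∑ w ∈ univ.erase v, F v w) + F v v := by
  have h1 : ∀ u : V, (∑ w : V, F u w) = (∑ w ∈ univ.erase v, F u w) + F u v :=
    fun u => (Finset.sum_erase_add _ _ (Finset.mem_univ v)).symm
  have h2 : (∑ u : V, ∑ w : V, F u w)
      = (∑ u ∈ univ.erase v, ∑ w : V, F u w) + (∑ w : V, F v w) :=
    (Finset.sum_erase_add _ _ (Finset.mem_univ v)).symm
  rw [h2, h1 v]
  simp only [h1]
  rw [Finset.sum_add_distrib]
  ring

lemma SFDephi_update (F : (V × Fin κ) → (V × Fin κ) → ℕ)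
    (hsym : ∀ x y, F x y = F y x) (hdiag : ∀ (w : V) (p q : Fin κ), F (w, p) (w, q) = 0)
    (g : V → Fin κ) (v : V) (p : Fin κ) :
    SFDephi F (Function.update g v p) + 2 * SFDlcnt F g v (g v)
      = SFDephi F g + 2 * SFDlcnt F g v p := by
  set g' := Function.update g v p with hg'
  have hgu : ∀ u : V, u ≠ v → g' u = g u := fun u hu => Function.update_of_ne hu _ _
  have hgv : g' v = p := Function.update_self _ _ _
  have e1 := SFDsum_split (fun u w => F (u, g' u) (w, g' w)) v
  have e2 := SFDsum_split (fun u w => F (u, g u) (w, g w)) v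
  have hD : (∑ u ∈ univ.erase v, ∑ w ∈ univ.erase v, F (u, g' u) (w, g' w))
      = ∑ u ∈ univ.erase v, ∑ w ∈ univ.erase v, F (u, g u) (w, g w) := by
    refine Finset.sum_congr rfl fun u hu => Finset.sum_congr rfl fun w hw => ?_
    rw [hgu u (Finset.mem_erase.mp hu).1, hgu w (Finset.mem_erase.mp hw).1]
  have hcol : (∑ u ∈ univ.erase v, F (u, g' u) (v, g' v)) = SFDlcnt F g v p := by
    refine Finset.sum_congr rfl fun u hu => ?_
    rw [hgu u (Finset.mem_erase.mp hu).1, hgv]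
  have hrow : (∑ w ∈ univ.erase v, F (v, g' v) (w, g' w)) = SFDlcnt F g v p := by
    rw [← hcol]
    exact Finset.sum_congr rfl fun w hw => hsym _ _
  have hcol' : (∑ u ∈ univ.erase v, F (u, g u) (v, g v)) = SFDlcnt F g v (g v) := rfl
  have hrow' : (∑ w ∈ univ.erase v, F (v, g v) (w, g w)) = SFDlcnt F g v (g v) := by
    rw [← hcol']
    exact Finset.sum_congr rfl fun w hw => hsym _ _
  have hephi1 : SFDephi F g' = (∑ u ∈ univ.erase v, ∑ w ∈ univ.erase v, F (u, g u) (w, g w))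
      + SFDlcnt F g v p + SFDlcnt F g v p := by
    unfold SFDephi
    rw [e1, hD, hcol, hrow, hdiag, add_zero]
  have hephi2 : SFDephi F g = (∑ u ∈ univ.erase v, ∑ w ∈ univ.erase v, F (u, g u) (w, g w))
      + SFDlcnt F g v (g v) + SFDlcnt F g v (g v) := by
    unfold SFDephi
    rw [e2, hcol', hrow', hdiag, add_zero]
  omega

/-- Edge-indicator weight. -/
noncomputable def SFDFE (H : SimpleGraph (V × Fin κ)) : (V × Fin κ) → (V × Fin κ) → ℕ :=
  fun x y => if H.Adj x y then 1 else 0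

/-- Bad-edge (weak–weak edge) indicator weight. -/
noncomputable def SFDFB (H : SimpleGraph (V × Fin κ)) (f : V × Fin κ → ℕ) :
    (V × Fin κ) → (V × Fin κ) → ℕ :=
  fun x y => if (H.Adj x y ∧ f x = 1 ∧ f y = 1) then 1 else 0

lemma SFDFE_sym (H : SimpleGraph (V × Fin κ)) : ∀ x y, SFDFE H x y = SFDFE H y x := by
  intro x y; unfold SFDFE; by_cases h : H.Adj x y
  · rw [if_pos h, if_pos h.symm]
  · rw [if_neg h, if_neg (fun h' => h h'.symm)]

lemma SFDFB_sym (H : SimpleGraph (V × Fin κ)) (f : V × Fin κ → ℕ) :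
    ∀ x y, SFDFB H f x y = SFDFB H f y x := by
  intro x y; unfold SFDFB; by_cases h : H.Adj x y ∧ f x = 1 ∧ f y = 1
  · rw [if_pos h, if_pos ⟨h.1.symm, h.2.2, h.2.1⟩]
  · rw [if_neg h, if_neg (fun h' => h ⟨h'.1.symm, h'.2.2, h'.2.1⟩)]

lemma SFDFE_diag {G : SimpleGraph V} {H : SimpleGraph (V × Fin κ)} (hH : IsCover κ G H) :
    ∀ (w : V) (p q : Fin κ), SFDFE H (w, p) (w, q) = 0 := by
  intro w p q
  exact if_neg (fun h => (hH.1 w w p q h).ne rfl)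

lemma SFDFB_diag {G : SimpleGraph V} {H : SimpleGraph (V × Fin κ)} (hH : IsCover κ G H)
    (f : V × Fin κ → ℕ) : ∀ (w : V) (p q : Fin κ), SFDFB H f (w, p) (w, q) = 0 := by
  intro w p q
  exact if_neg (fun h => (hH.1 w w p q h.1).ne rfl)

/-- The total number of conflicts of `v` over all colours is at most `deg_G v`. -/
lemma SFDlcnt_sum_le {G : SimpleGraph V} {H : SimpleGraph (V × Fin κ)} (hH : IsCover κ G H)
    (g : V → Fin κ) (v : V) :
    ∑ p : Fin κ, SFDlcnt (SFDFE H) g v p ≤ (G.neighborSet v).ncard := by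
  have hswap : ∑ p : Fin κ, SFDlcnt (SFDFE H) g v p
      = ∑ u ∈ univ.erase v, ∑ p : Fin κ, SFDFE H (u, g u) (v, p) := by
    unfold SFDlcnt
    rw [Finset.sum_comm]
  have hinner : ∀ u : V, (∑ p : Fin κ, SFDFE H (u, g u) (v, p))
      ≤ if G.Adj v u then 1 else 0 := by
    intro u
    by_cases hex : ∃ p, H.Adj (u, g u) (v, p)
    · obtain ⟨p₁, hp₁⟩ := hex
      have hG : G.Adj v u := (hH.1 u v (g u) p₁ hp₁).symm
      rw [if_pos hG]
      have hterm : ∀ p : Fin κ, SFDFE H (u, g u) (v, p) = if p = p₁ then 1 else 0 := by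
        intro p
        unfold SFDFE
        by_cases hp : H.Adj (u, g u) (v, p)
        · rw [if_pos hp, if_pos (hH.2 u v (g u) p p₁ hp hp₁)]
        · rw [if_neg hp, if_neg (fun h => hp (by rw [h]; exact hp₁))]
      rw [Finset.sum_congr rfl (fun p _ => hterm p)]
      rw [Finset.sum_ite_eq' Finset.univ p₁ (fun _ => 1), if_pos (Finset.mem_univ p₁)]
    · have hterm : ∀ p : Fin κ, SFDFE H (u, g u) (v, p) = 0 :=
        fun p => if_neg (fun h => hex ⟨p, h⟩)
      rw [Finset.sum_congr rfl (fun p _ => hterm p)]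
      simp
  have hbound : ∑ u ∈ univ.erase v, (if G.Adj v u then 1 else 0)
      ≤ ∑ u : V, (if G.Adj v u then 1 else 0) :=
    Finset.sum_le_sum_of_subset (Finset.erase_subset _ _)
  have hcard : ∑ u : V, (if G.Adj v u then 1 else 0)
      = (G.neighborSet v).ncard := by
    rw [Set.ncard_eq_toFinset_card']
    rw [← Finset.card_filter]
    congr 1
    ext u
    simp [SimpleGraph.mem_neighborSet]
  calc ∑ p : Fin κ, SFDlcnt (SFDFE H) g v p
      = ∑ u ∈ univ.erase v, ∑ p : Fin κ, SFDFE H (u, g u) (v, p) := hswap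
    _ ≤ ∑ u ∈ univ.erase v, (if G.Adj v u then 1 else 0) :=
        Finset.sum_le_sum (fun u _ => hinner u)
    _ ≤ ∑ u : V, (if G.Adj v u then 1 else 0) := hbound
    _ = (G.neighborSet v).ncard := hcard

end SFDAux

/-- If `G` is connected and `(H, f)` is a valued cover with
`f` taking values in `{0, 1, 2}` and `∑ q f(v,q) > deg_G v` for every vertex,
then `H` has a strictly `f`-degenerate transversal `R` with `Δ(H[R]) ≤ 1`. -/
theorem exists_SFDTransversal_maxDegree_le_one
    {V : Type} [Fintype V] (G : SimpleGraph V) (hG : G.Connected) (κ : ℕ)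
    (H : SimpleGraph (V × Fin κ)) (hH : IsCover κ G H) (f : V × Fin κ → ℕ)
    (hf2 : ∀ x : V × Fin κ, f x ≤ 2)
    (hf : ∀ v : V, (G.neighborSet v).ncard < ∑ q : Fin κ, f (v, q)) :
    ∃ R : Set (V × Fin κ), IsTransversal R ∧ StrictlyFDegenerateOn H f R ∧
      ∀ x ∈ R, (R ∩ {y | H.Adj x y}).ncard ≤ 1 := by
  classical
  -- every vertex has a colour of positive value
  have hpos : ∀ v : V, ∃ p : Fin κ, 1 ≤ f (v, p) := by
    intro v
    by_contra hcon
    push_neg at hcon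
    have hz : (∑ q : Fin κ, f (v, q)) = 0 :=
      Finset.sum_eq_zero (fun q _ => by have := hcon q; omega)
    have := hf v
    omega
  -- minimise Φ = (M+1)·(#edges) + (#weak-weak edges) over positive transversals
  obtain ⟨g, hgP, hgmin⟩ :
      ∃ g : V → Fin κ, (∀ v, 1 ≤ f (v, g v)) ∧
        ∀ g' : V → Fin κ, (∀ v, 1 ≤ f (v, g' v)) →
          (Fintype.card V * Fintype.card V + 1) * SFDephi (SFDFE H) g + SFDephi (SFDFB H f) g
            ≤ (Fintype.card V * Fintype.card V + 1) * SFDephi (SFDFE H) g'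
              + SFDephi (SFDFB H f) g' := by
    obtain ⟨g₀, hg₀⟩ : ∃ g₀ : V → Fin κ, ∀ v, 1 ≤ f (v, g₀ v) :=
      ⟨fun v => (hpos v).choose, fun v => (hpos v).choose_spec⟩
    obtain ⟨g, hg1, hg2⟩ := Finset.exists_min_image
      (Finset.univ.filter fun g : V → Fin κ => ∀ v, 1 ≤ f (v, g v))
      (fun g => (Fintype.card V * Fintype.card V + 1) * SFDephi (SFDFE H) g
        + SFDephi (SFDFB H f) g)
      ⟨g₀, Finset.mem_filter.mpr ⟨Finset.mem_univ _, hg₀⟩⟩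
    exact ⟨g, (Finset.mem_filter.mp hg1).2,
      fun g' hg' => hg2 g' (Finset.mem_filter.mpr ⟨Finset.mem_univ _, hg'⟩)⟩
  have hb2_le : ∀ g' : V → Fin κ,
      SFDephi (SFDFB H f) g' ≤ Fintype.card V * Fintype.card V := by
    intro g'
    calc SFDephi (SFDFB H f) g' ≤ ∑ _u : V, ∑ _w : V, 1 :=
          Finset.sum_le_sum (fun u _ => Finset.sum_le_sum (fun w _ => by
            unfold SFDFB; split <;> omega))
      _ = Fintype.card V * Fintype.card V := by
          simp [Finset.card_univ, mul_comm]
  have hupd : ∀ (v : V) (p : Fin κ), 1 ≤ f (v, p) →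
      ∀ w, 1 ≤ f (w, Function.update g v p w) := by
    intro v p hp w
    by_cases hw : w = v
    · subst hw; rw [Function.update_self]; exact hp
    · rw [Function.update_of_ne hw]; exact hgP w
  -- at the minimiser, the chosen colour minimises the conflict count
  have min1 : ∀ (v : V) (p : Fin κ), 1 ≤ f (v, p) →
      SFDlcnt (SFDFE H) g v (g v) ≤ SFDlcnt (SFDFE H) g v p := by
    intro v p hp
    by_contra hlt
    push_neg at hlt
    have hkey := SFDephi_update (SFDFE H) (SFDFE_sym H) (SFDFE_diag hH) g v p
    have hE : SFDephi (SFDFE H) (Function.update g v p) + 1 ≤ SFDephi (SFDFE H) g := by omega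
    have hΦ : (Fintype.card V * Fintype.card V + 1) * SFDephi (SFDFE H) (Function.update g v p)
        + SFDephi (SFDFB H f) (Function.update g v p)
        < (Fintype.card V * Fintype.card V + 1) * SFDephi (SFDFE H) g
          + SFDephi (SFDFB H f) g := by
      have h1 := hb2_le (Function.update g v p)
      have h2 : (Fintype.card V * Fintype.card V + 1)
            * (SFDephi (SFDFE H) (Function.update g v p) + 1)
          ≤ (Fintype.card V * Fintype.card V + 1) * SFDephi (SFDFE H) g :=
        mul_le_mul_right hE _
      have h3 : (Fintype.card V * Fintype.card V + 1)
            * (SFDephi (SFDFE H) (Function.update g v p) + 1)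
          = (Fintype.card V * Fintype.card V + 1)
            * SFDephi (SFDFE H) (Function.update g v p)
            + (Fintype.card V * Fintype.card V + 1) := by ring
      omega
    exact absurd (hgmin _ (hupd v p hp)) (not_le.mpr hΦ)
  -- at the minimiser, every chosen vertex has at most one chosen neighbour
  have min2 : ∀ v : V, SFDlcnt (SFDFE H) g v (g v) ≤ 1 := by
    intro v
    by_contra hcon
    push_neg at hcon
    have hle : ∀ p : Fin κ, f (v, p) ≤ SFDlcnt (SFDFE H) g v p := by
      intro p
      by_cases hp : 1 ≤ f (v, p)
      · have h1 := min1 v p hp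
        have h2 := hf2 (v, p)
        omega
      · omega
    have hsumle : (∑ q : Fin κ, f (v, q)) ≤ ∑ p : Fin κ, SFDlcnt (SFDFE H) g v p :=
      Finset.sum_le_sum (fun p _ => hle p)
    have h3 := SFDlcnt_sum_le hH g v
    have h4 := hf v
    omega
  -- at the minimiser, no chosen edge has two weak endpoints
  have min3 : ∀ u v : V, H.Adj (u, g u) (v, g v) →
      f (u, g u) = 1 → f (v, g v) = 1 → False := by
    intro u v hadj hfu hfv
    have huv : u ≠ v := (hH.1 u v (g u) (g v) hadj).ne
    have hmemu : u ∈ Finset.univ.erase v := Finset.mem_erase.mpr ⟨huv, Finset.mem_univ u⟩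
    have hC1 : 1 ≤ SFDlcnt (SFDFE H) g v (g v) := by
      have h1 : SFDFE H (u, g u) (v, g v) = 1 := if_pos hadj
      have h2 : SFDFE H (u, g u) (v, g v) ≤ SFDlcnt (SFDFE H) g v (g v) :=
        Finset.single_le_sum (f := fun u => SFDFE H (u, g u) (v, g v))
          (fun i _ => Nat.zero_le _) hmemu
      omega
    have hEx : ∃ p₀ : Fin κ, f (v, p₀) = 2 ∧ SFDlcnt (SFDFE H) g v p₀ = 1 := by
      by_contra hno
      push_neg at hno
      have hle : ∀ p : Fin κ, f (v, p) ≤ SFDlcnt (SFDFE H) g v p := by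
        intro p
        by_cases hp : 1 ≤ f (v, p)
        · have h1 : 1 ≤ SFDlcnt (SFDFE H) g v p := le_trans hC1 (min1 v p hp)
          have h2 := hf2 (v, p)
          by_cases h3 : f (v, p) = 2
          · have := hno p h3
            omega
          · omega
        · omega
      have hsumle : (∑ q : Fin κ, f (v, q)) ≤ ∑ p : Fin κ, SFDlcnt (SFDFE H) g v p :=
        Finset.sum_le_sum (fun p _ => hle p)
      have h3 := SFDlcnt_sum_le hH g v
      have h4 := hf v
      omega
    obtain ⟨p₀, hp₀2, hp₀c⟩ := hEx
    have hkeyE := SFDephi_update (SFDFE H) (SFDFE_sym H) (SFDFE_diag hH) g v p₀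
    have hkeyB := SFDephi_update (SFDFB H f) (SFDFB_sym H f) (SFDFB_diag hH f) g v p₀
    have hbp₀ : SFDlcnt (SFDFB H f) g v p₀ = 0 :=
      Finset.sum_eq_zero (fun w _ => if_neg (by rintro ⟨-, -, h1⟩; omega))
    have hbgv : 1 ≤ SFDlcnt (SFDFB H f) g v (g v) := by
      have h1 : SFDFB H f (u, g u) (v, g v) = 1 := if_pos ⟨hadj, hfu, hfv⟩
      have h2 : SFDFB H f (u, g u) (v, g v) ≤ SFDlcnt (SFDFB H f) g v (g v) :=
        Finset.single_le_sum (f := fun u => SFDFB H f (u, g u) (v, g v))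
          (fun i _ => Nat.zero_le _) hmemu
      omega
    have hE : SFDephi (SFDFE H) (Function.update g v p₀) ≤ SFDephi (SFDFE H) g := by omega
    have hB : SFDephi (SFDFB H f) (Function.update g v p₀) < SFDephi (SFDFB H f) g := by omega
    have hΦ : (Fintype.card V * Fintype.card V + 1)
          * SFDephi (SFDFE H) (Function.update g v p₀)
          + SFDephi (SFDFB H f) (Function.update g v p₀)
        < (Fintype.card V * Fintype.card V + 1) * SFDephi (SFDFE H) g
          + SFDephi (SFDFB H f) g :=
      add_lt_add_of_le_of_lt (mul_le_mul_right hE _) hB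
    exact absurd (hgmin _ (hupd v p₀ (by omega))) (not_le.mpr hΦ)
  -- the transversal
  set R : Set (V × Fin κ) := {x : V × Fin κ | x.2 = g x.1} with hR
  have htrans : IsTransversal R := by
    intro v
    refine ⟨g v, rfl, ?_⟩
    intro p hp
    exact hp
  have hdeg : ∀ x ∈ R, (R ∩ {y | H.Adj x y}).ncard ≤ 1 := by
    intro x hx
    have hx2 : x.2 = g x.1 := hx
    have hxe : (x.1, g x.1) = x := by rw [← hx2]
    have hsub : R ∩ {y | H.Adj x y}
        ⊆ ↑(((Finset.univ.erase x.1).filter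
            (fun u => H.Adj (u, g u) (x.1, g x.1))).image (fun u => (u, g u))) := by
      rintro y ⟨hyR, hyAdj⟩
      have hy2 : y.2 = g y.1 := hyR
      have hye : (y.1, g y.1) = y := by rw [← hy2]
      have hAdj' : H.Adj (y.1, g y.1) (x.1, g x.1) := by
        rw [hye, hxe]
        exact (hyAdj : H.Adj x y).symm
      have hne : y.1 ≠ x.1 := by
        intro h
        have hyx : y = x := by rw [← hye, ← hxe, h]
        rw [hyx] at hyAdj
        exact H.irrefl hyAdj
      refine Finset.mem_coe.mpr (Finset.mem_image.mpr ⟨y.1, ?_, hye⟩)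
      exact Finset.mem_filter.mpr ⟨Finset.mem_erase.mpr ⟨hne, Finset.mem_univ _⟩, hAdj'⟩
    have h1 : (R ∩ {y | H.Adj x y}).ncard
        ≤ (((Finset.univ.erase x.1).filter
            (fun u => H.Adj (u, g u) (x.1, g x.1))).image (fun u => (u, g u))).card := by
      rw [← Set.ncard_coe_finset]
      exact Set.ncard_le_ncard hsub (Set.toFinite _)
    have h2 := Finset.card_image_le (s := (Finset.univ.erase x.1).filter
        (fun u => H.Adj (u, g u) (x.1, g x.1))) (f := fun u => (u, g u))
    have h3 : ((Finset.univ.erase x.1).filter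
          (fun u => H.Adj (u, g u) (x.1, g x.1))).card
        = SFDlcnt (SFDFE H) g x.1 (g x.1) := by
      rw [Finset.card_filter]
      rfl
    have h4 := min2 x.1
    omega
  have hstrict : StrictlyFDegenerateOn H f R := by
    intro S hSR hSne
    by_cases hiso : ∃ x ∈ S, ∀ y ∈ S, ¬ H.Adj x y
    · obtain ⟨x, hxS, hxiso⟩ := hiso
      refine ⟨x, hxS, ?_⟩
      have hempty : S ∩ {y | H.Adj x y} = ∅ := by
        ext y
        simp only [Set.mem_inter_iff, Set.mem_setOf_eq, Set.mem_empty_iff_false,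
          iff_false, not_and]
        exact fun hyS => hxiso y hyS
      rw [hempty, Set.ncard_empty]
      have hx2 : x.2 = g x.1 := hSR hxS
      have h1 : 1 ≤ f (x.1, g x.1) := hgP x.1
      have hxe : (x.1, g x.1) = x := by rw [← hx2]
      rw [hxe] at h1
      omega
    · push_neg at hiso
      obtain ⟨x, hxS⟩ := hSne
      obtain ⟨y, hyS, hxy⟩ := hiso x hxS
      have hx2 : x.2 = g x.1 := hSR hxS
      have hy2 : y.2 = g y.1 := hSR hyS
      have hxe : (x.1, g x.1) = x := by rw [← hx2]
      have hye : (y.1, g y.1) = y := by rw [← hy2]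
      have hAdj' : H.Adj (x.1, g x.1) (y.1, g y.1) := by rw [hxe, hye]; exact hxy
      have hnb : ¬ (f x = 1 ∧ f y = 1) := by
        rintro ⟨h1, h2⟩
        exact min3 x.1 y.1 hAdj' (by rw [hxe]; exact h1) (by rw [hye]; exact h2)
      have hfx1 : 1 ≤ f x := by have h := hgP x.1; rw [hxe] at h; exact h
      have hfy1 : 1 ≤ f y := by have h := hgP y.1; rw [hye] at h; exact h
      have hc : f x = 2 ∨ f y = 2 := by
        have h1 := hf2 x
        have h2 := hf2 y
        by_contra hcc
        push_neg at hcc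
        exact hnb ⟨by omega, by omega⟩
      have hkey : ∀ z, z ∈ S → f z = 2 → (S ∩ {w | H.Adj z w}).ncard < f z := by
        intro z hzS hz2
        have hmono : (S ∩ {w | H.Adj z w}).ncard ≤ (R ∩ {w | H.Adj z w}).ncard :=
          Set.ncard_le_ncard (Set.inter_subset_inter_left _ hSR) (Set.toFinite _)
        have h := hdeg z (hSR hzS)
        omega
      rcases hc with h | h
      · exact ⟨x, hxS, hkey x hxS h⟩
      · exact ⟨y, hyS, hkey y hyS h⟩
  exact ⟨R, htrans, hstrict, hdeg⟩
end
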